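/- Let u : ℝ^d_+ → ℝ be monotone (x ≤ y coordinatewise implies u(x) ≤ u(y)) with u(0) = 0, let φ : ℝ^d_+ × ℝ^d_+ → ℝ_+ and Θ ≥ 0 satisfy |u((x+y)/2) − ½u(x) − ½u(y)| ≤ φ(x,y) for all x, y ∈ ℝ^d_+ and Σ_{i=0}^{n} 2^{−i} φ(2^i x, 2^i y) ≤ Θ for all n ≥ 1 and all x, y ∈ ℝ^d_+. Then for every x ∈ ℝ^d_+ the limit v(x) := lim_{n→∞} 2^{−n} u(2^n x) exists, the resulting function v is the restriction to ℝ^d_+ of a linear map on ℝ^d (indeed v(x) = Σ_{i=1}^d xᵢ v(eᵢ) for all x ∈ ℝ^d_+, where eᵢ are the standard unit vectors), and sup_{x ∈ ℝ^d_+} |u(x) − v(x)| ≤ Θ. -/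

import Mathlib

/-!
Hyers' direct method. Jensen's inequality at `(2^(n+1) x, 0)`, together with `u 0 = 0`, shows
that consecutive terms of `2^(-n) u (2^n x)` differ by at most `2^(-n) φ (2^(n+1) x, 0)`, a
summable sequence with sum at most `Θ`; so the sequence converges to some `v x` with
`|u x - v x| ≤ Θ`. Since `2^(-n) φ (2^n x, 2^n y) → 0`, passing to the limit makes `v` exactly
Jensen and doubling-homogeneous, hence additive on the cone. Monotonicity passes from `u` to `v`,
and an additive monotone function on `[0, ∞)` is linear; this gives homogeneity, and additivity
along the coordinate decomposition of `x` gives the formula for `v`.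
-/

open Filter Finset Topology

theorem sum_range_le_of_sum_range_succ_le {a : ℕ → ℝ} {Θ : ℝ} (ha : ∀ i, 0 ≤ a i)
    (h : ∀ n, 1 ≤ n → ∑ i ∈ range (n + 1), a i ≤ Θ) (n : ℕ) : ∑ i ∈ range n, a i ≤ Θ :=
  calc ∑ i ∈ range n, a i ≤ ∑ i ∈ range (max n 1 + 1), a i :=
        sum_le_sum_of_subset_of_nonneg (range_subset_range.2 (by omega)) fun i _ _ => ha i
    _ ≤ Θ := h _ (le_max_right _ _)

theorem apply_eq_mul_apply_one_of_add_of_mono {w : ℝ → ℝ}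
    (hadd : ∀ s t, 0 ≤ s → 0 ≤ t → w (s + t) = w s + w t)
    (hmono : ∀ s t, 0 ≤ s → s ≤ t → w s ≤ w t) {t : ℝ} (ht : 0 ≤ t) : w t = t * w 1 := by
  have hw0 : w 0 = 0 := by simpa using hadd 0 0 le_rfl le_rfl
  have hw1 : 0 ≤ w 1 := hw0 ▸ hmono 0 1 le_rfl zero_le_one
  have hnat : ∀ (n : ℕ) {s : ℝ}, 0 ≤ s → w (n * s) = n * w s := by
    intro n s hs
    induction n with
    | zero => simpa using hw0
    | succ n ih => rw [Nat.cast_succ, add_one_mul, hadd _ _ (by positivity) hs, ih, add_one_mul]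
  -- Sandwiching `n * t` between consecutive integers gives `n * |w t - t * w 1| ≤ w 1`.
  have hbound : ∀ n : ℕ, n * |w t - t * w 1| ≤ w 1 := by
    intro n
    set k := ⌊n * t⌋₊
    have hk : (k : ℝ) ≤ n * t := Nat.floor_le (by positivity)
    have hk' : n * t < k + 1 := Nat.lt_floor_add_one _
    have hwk : ∀ m : ℕ, w m = m * w 1 := fun m => by simpa using hnat m zero_le_one
    have hlow : k * w 1 ≤ n * w t := by
      rw [← hwk, ← hnat n ht]; exact hmono _ _ k.cast_nonneg hk
    have hupp : n * w t ≤ (k + 1) * w 1 := by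
      have := hmono _ _ (by positivity) hk'.le
      rwa [hnat n ht, ← Nat.cast_succ, hwk, Nat.cast_succ] at this
    rw [← abs_of_nonneg (n.cast_nonneg : (0 : ℝ) ≤ n), ← abs_mul, abs_le]
    constructor <;> nlinarith
  by_contra hne
  have hpos : 0 < |w t - t * w 1| := abs_pos.2 (sub_ne_zero.2 hne)
  obtain ⟨n, hn⟩ := exists_nat_gt (w 1 / |w t - t * w 1|)
  rw [div_lt_iff₀ hpos] at hn
  linarith [hbound n]

theorem apply_smul_of_add_of_mono {E : Type*} [AddCommMonoid E] [PartialOrder E] [Module ℝ E]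
    [PosSMulMono ℝ E] [SMulPosMono ℝ E] {v : E → ℝ}
    (hadd : ∀ x y, 0 ≤ x → 0 ≤ y → v (x + y) = v x + v y)
    (hmono : ∀ x y, 0 ≤ x → x ≤ y → v x ≤ v y) {c : ℝ} {x : E} (hc : 0 ≤ c) (hx : 0 ≤ x) :
    v (c • x) = c * v x := by
  simpa using apply_eq_mul_apply_one_of_add_of_mono (w := fun t => v (t • x))
    (fun s t hs ht => by
      simpa only [add_smul] using hadd _ _ (smul_nonneg hs hx) (smul_nonneg ht hx))
    (fun s t hs hst => hmono _ _ (smul_nonneg hs hx) (smul_le_smul_of_nonneg_right hst hx)) hc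

theorem map_sum_of_add_of_nonneg {E ι : Type*} [AddCommMonoid E] [PartialOrder E]
    [IsOrderedAddMonoid E] {v : E → ℝ} (hv0 : v 0 = 0)
    (hadd : ∀ x y, 0 ≤ x → 0 ≤ y → v (x + y) = v x + v y) {s : Finset ι} {f : ι → E}
    (hf : ∀ i ∈ s, 0 ≤ f i) : v (∑ i ∈ s, f i) = ∑ i ∈ s, v (f i) := by
  induction s using Finset.cons_induction with
  | empty => simpa using hv0
  | cons a s _ ih =>
    rw [forall_mem_cons] at hf
    rw [sum_cons, sum_cons, hadd _ _ hf.1 (sum_nonneg hf.2), ih hf.2]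

theorem eq_sum_mul_apply_single_of_add_of_mono {ι : Type*} [Fintype ι] [DecidableEq ι]
    {v : (ι → ℝ) → ℝ} (hadd : ∀ x y, 0 ≤ x → 0 ≤ y → v (x + y) = v x + v y)
    (hmono : ∀ x y, 0 ≤ x → x ≤ y → v x ≤ v y) {x : ι → ℝ} (hx : 0 ≤ x) :
    v x = ∑ i, x i * v (Pi.single i 1) := by
  have hsmul (c : ℝ) (y : ι → ℝ) (hc : 0 ≤ c) (hy : 0 ≤ y) : v (c • y) = c * v y :=
    apply_smul_of_add_of_mono hadd hmono hc hy
  have hv0 : v 0 = 0 := by simpa using hsmul 0 0 le_rfl le_rfl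
  have hsingle : ∀ i, (0 : ι → ℝ) ≤ Pi.single i 1 := fun i => Pi.single_nonneg.2 zero_le_one
  calc v x = v (∑ i, x i • Pi.single i 1) := congrArg v (pi_eq_sum_univ' x)
    _ = ∑ i, v (x i • Pi.single i 1) :=
        map_sum_of_add_of_nonneg hv0 hadd fun i _ => smul_nonneg (hx i) (hsingle i)
    _ = ∑ i, x i * v (Pi.single i 1) := sum_congr rfl fun i _ => hsmul _ _ (hx i) (hsingle i)

section Hyers

variable {E : Type*} [AddCommGroup E] [Module ℝ E]

noncomputable def hyersSeq (u : E → ℝ) (x : E) (n : ℕ) : ℝ := (1 / 2 : ℝ) ^ n * u ((2 : ℝ) ^ n • x)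

noncomputable def hyersLimit (u : E → ℝ) (x : E) : ℝ := limUnder atTop (hyersSeq u x)

noncomputable def weightedErr (φ : E → E → ℝ) (x y : E) (n : ℕ) : ℝ :=
  (1 / 2 : ℝ) ^ n * φ ((2 : ℝ) ^ n • x) ((2 : ℝ) ^ n • y)

theorem hyersSeq_zero (u : E → ℝ) (x : E) : hyersSeq u x 0 = u x := by simp [hyersSeq]

theorem hyersSeq_two_smul (u : E → ℝ) (x : E) (n : ℕ) :
    hyersSeq u ((2 : ℝ) • x) n = 2 * hyersSeq u x (n + 1) := by
  simp only [hyersSeq, smul_smul, ← pow_succ]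
  ring

theorem hyersLimit_two_smul {u : E → ℝ} {x : E}
    (hx : Tendsto (hyersSeq u x) atTop (𝓝 (hyersLimit u x)))
    (h2x : Tendsto (hyersSeq u ((2 : ℝ) • x)) atTop (𝓝 (hyersLimit u ((2 : ℝ) • x)))) :
    hyersLimit u ((2 : ℝ) • x) = 2 * hyersLimit u x := by
  refine tendsto_nhds_unique h2x ?_
  rw [funext (hyersSeq_two_smul u x)]
  exact ((tendsto_add_atTop_iff_nat 1).2 hx).const_mul 2

variable [PartialOrder E]

def IsApproxJensen (u : E → ℝ) (φ : E → E → ℝ) : Prop :=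
  ∀ x y : E, 0 ≤ x → 0 ≤ y → |u ((1 / 2 : ℝ) • (x + y)) - (1 / 2) * u x - (1 / 2) * u y| ≤ φ x y

variable [PosSMulMono ℝ E] {u : E → ℝ} {φ : E → E → ℝ}

theorem abs_hyersSeq_succ_sub_le (hu0 : u 0 = 0) (hJ : IsApproxJensen u φ) {x : E} (hx : 0 ≤ x)
    (n : ℕ) : |hyersSeq u x (n + 1) - hyersSeq u x n| ≤ weightedErr φ ((2 : ℝ) • x) 0 n := by
  have h := hJ ((2 : ℝ) ^ (n + 1) • x) 0 (smul_nonneg (by positivity) hx) le_rfl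
  have hsmul : (1 / 2 : ℝ) • (2 : ℝ) ^ (n + 1) • x = (2 : ℝ) ^ n • x := by
    rw [smul_smul]; congr 1; ring
  rw [add_zero, hsmul, hu0, mul_zero, sub_zero] at h
  have hdiff : hyersSeq u x (n + 1) - hyersSeq u x n
      = -((1 / 2 : ℝ) ^ n * (u ((2 : ℝ) ^ n • x) - 1 / 2 * u ((2 : ℝ) ^ (n + 1) • x))) := by
    simp only [hyersSeq, pow_succ]; ring
  rw [hdiff, abs_neg, abs_mul, abs_of_nonneg (by positivity), weightedErr, smul_zero, smul_smul,
    ← pow_succ]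
  exact mul_le_mul_of_nonneg_left h (by positivity)

theorem tendsto_hyersSeq (hu0 : u 0 = 0) (hJ : IsApproxJensen u φ) {x : E} (hx : 0 ≤ x)
    (hs : Summable (weightedErr φ ((2 : ℝ) • x) 0)) :
    Tendsto (hyersSeq u x) atTop (𝓝 (hyersLimit u x)) :=
  (cauchySeq_of_dist_le_of_summable _ (fun n => by
    rw [dist_comm]; exact abs_hyersSeq_succ_sub_le hu0 hJ hx n) hs).tendsto_limUnder

theorem abs_sub_hyersLimit_le (hu0 : u 0 = 0) (hJ : IsApproxJensen u φ) {x : E} (hx : 0 ≤ x)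
    (hs : Summable (weightedErr φ ((2 : ℝ) • x) 0)) :
    |u x - hyersLimit u x| ≤ ∑' n, weightedErr φ ((2 : ℝ) • x) 0 n := by
  rw [← hyersSeq_zero u x]
  exact dist_le_tsum_of_dist_le_of_tendsto₀ _
    (fun n => by rw [dist_comm]; exact abs_hyersSeq_succ_sub_le hu0 hJ hx n) hs
    (tendsto_hyersSeq hu0 hJ hx hs)

theorem abs_hyersSeq_midpoint_sub_le (hJ : IsApproxJensen u φ) {x y : E} (hx : 0 ≤ x)
    (hy : 0 ≤ y) (n : ℕ) :
    |hyersSeq u ((1 / 2 : ℝ) • (x + y)) n - 1 / 2 * hyersSeq u x n - 1 / 2 * hyersSeq u y n|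
      ≤ weightedErr φ x y n := by
  have h := hJ ((2 : ℝ) ^ n • x) ((2 : ℝ) ^ n • y) (smul_nonneg (by positivity) hx)
    (smul_nonneg (by positivity) hy)
  rw [← smul_add, smul_comm] at h
  have hdiff : hyersSeq u ((1 / 2 : ℝ) • (x + y)) n - 1 / 2 * hyersSeq u x n
        - 1 / 2 * hyersSeq u y n
      = (1 / 2 : ℝ) ^ n * (u ((2 : ℝ) ^ n • (1 / 2 : ℝ) • (x + y))
        - 1 / 2 * u ((2 : ℝ) ^ n • x) - 1 / 2 * u ((2 : ℝ) ^ n • y)) := by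
    simp only [hyersSeq]; ring
  rw [hdiff, abs_mul, abs_of_nonneg (by positivity)]
  exact mul_le_mul_of_nonneg_left h (by positivity)

theorem hyersLimit_mono (hmono : ∀ x y : E, 0 ≤ x → x ≤ y → u x ≤ u y)
    (hv : ∀ x : E, 0 ≤ x → Tendsto (hyersSeq u x) atTop (𝓝 (hyersLimit u x))) {x y : E}
    (hx : 0 ≤ x) (hxy : x ≤ y) : hyersLimit u x ≤ hyersLimit u y :=
  le_of_tendsto_of_tendsto' (hv x hx) (hv y (hx.trans hxy)) fun n =>
    mul_le_mul_of_nonneg_left (hmono _ _ (smul_nonneg (by positivity) hx)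
      (smul_le_smul_of_nonneg_left hxy (by positivity))) (by positivity)

variable [IsOrderedAddMonoid E]

theorem hyersLimit_midpoint (hJ : IsApproxJensen u φ)
    (hv : ∀ x : E, 0 ≤ x → Tendsto (hyersSeq u x) atTop (𝓝 (hyersLimit u x))) {x y : E}
    (hx : 0 ≤ x) (hy : 0 ≤ y) (herr : Tendsto (weightedErr φ x y) atTop (𝓝 0)) :
    hyersLimit u ((1 / 2 : ℝ) • (x + y)) = 1 / 2 * hyersLimit u x + 1 / 2 * hyersLimit u y := by
  set z := (1 / 2 : ℝ) • (x + y)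
  have hdefect : Tendsto (fun n => hyersSeq u z n - 1 / 2 * hyersSeq u x n
      - 1 / 2 * hyersSeq u y n) atTop (𝓝 0) :=
    squeeze_zero_norm (abs_hyersSeq_midpoint_sub_le hJ hx hy) herr
  have hlim := (hdefect.add ((hv x hx).const_mul (1 / 2))).add ((hv y hy).const_mul (1 / 2))
  rw [zero_add] at hlim
  exact tendsto_nhds_unique (hv z (smul_nonneg (by norm_num) (add_nonneg hx hy)))
    (hlim.congr fun n => by ring)

theorem hyersLimit_add (hJ : IsApproxJensen u φ)
    (hv : ∀ x : E, 0 ≤ x → Tendsto (hyersSeq u x) atTop (𝓝 (hyersLimit u x))) {x y : E}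
    (hx : 0 ≤ x) (hy : 0 ≤ y) (herr : Tendsto (weightedErr φ x y) atTop (𝓝 0)) :
    hyersLimit u (x + y) = hyersLimit u x + hyersLimit u y := by
  have hz : 0 ≤ (1 / 2 : ℝ) • (x + y) := smul_nonneg (by norm_num) (add_nonneg hx hy)
  have hdouble : (2 : ℝ) • (1 / 2 : ℝ) • (x + y) = x + y := by rw [smul_smul]; norm_num
  have h := hyersLimit_two_smul (hv _ hz) (hv _ (smul_nonneg zero_le_two hz))
  rw [hdouble, hyersLimit_midpoint hJ hv hx hy herr] at h
  linarith

end Hyers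

theorem stmt_9_general (d : ℕ) (u : (Fin d → ℝ) → ℝ)
    (hmono : ∀ x y : Fin d → ℝ, 0 ≤ x → x ≤ y → u x ≤ u y)
    (hu0 : u 0 = 0)
    (φ : (Fin d → ℝ) → (Fin d → ℝ) → ℝ) (hφ : ∀ x y, 0 ≤ φ x y)
    (Θ : ℝ)
    (hJ : ∀ x y : Fin d → ℝ, 0 ≤ x → 0 ≤ y →
      |u ((1 / 2 : ℝ) • (x + y)) - (1 / 2) * u x - (1 / 2) * u y| ≤ φ x y)
    (hsum : ∀ n : ℕ, 1 ≤ n → ∀ x y : Fin d → ℝ, 0 ≤ x → 0 ≤ y →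
      ∑ i ∈ Finset.range (n + 1), (1 / 2 : ℝ) ^ i * φ ((2 : ℝ) ^ i • x) ((2 : ℝ) ^ i • y) ≤ Θ) :
    ∃ v : (Fin d → ℝ) → ℝ,
      (∀ x : Fin d → ℝ, 0 ≤ x →
        Filter.Tendsto (fun n : ℕ => (1 / 2 : ℝ) ^ n * u ((2 : ℝ) ^ n • x))
          Filter.atTop (nhds (v x))) ∧
      (∀ x : Fin d → ℝ, 0 ≤ x → v x = ∑ i, x i * v (Pi.single i 1)) ∧
      (∀ x : Fin d → ℝ, 0 ≤ x → |u x - v x| ≤ Θ) := by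
  have herr_nonneg (x y : Fin d → ℝ) (n : ℕ) : 0 ≤ weightedErr φ x y n :=
    mul_nonneg (by positivity) (hφ _ _)
  have hpartial (x y : Fin d → ℝ) (hx : 0 ≤ x) (hy : 0 ≤ y) (n : ℕ) :
      ∑ i ∈ range n, weightedErr φ x y i ≤ Θ :=
    sum_range_le_of_sum_range_succ_le (herr_nonneg x y) (fun m hm => hsum m hm x y hx hy) n
  have hsummable (x y : Fin d → ℝ) (hx : 0 ≤ x) (hy : 0 ≤ y) : Summable (weightedErr φ x y) :=
    summable_of_sum_range_le (herr_nonneg x y) (hpartial x y hx hy)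
  have h2x (x : Fin d → ℝ) (hx : 0 ≤ x) : 0 ≤ (2 : ℝ) • x := smul_nonneg zero_le_two hx
  have hv (x : Fin d → ℝ) (hx : 0 ≤ x) : Tendsto (hyersSeq u x) atTop (𝓝 (hyersLimit u x)) :=
    tendsto_hyersSeq hu0 hJ hx (hsummable _ _ (h2x x hx) le_rfl)
  have hadd (x y : Fin d → ℝ) (hx : 0 ≤ x) (hy : 0 ≤ y) :
      hyersLimit u (x + y) = hyersLimit u x + hyersLimit u y :=
    hyersLimit_add hJ hv hx hy (hsummable x y hx hy).tendsto_atTop_zero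
  refine ⟨hyersLimit u, hv, fun x hx => eq_sum_mul_apply_single_of_add_of_mono hadd
    (fun x y hx hxy => hyersLimit_mono hmono hv hx hxy) hx, fun x hx => ?_⟩
  calc |u x - hyersLimit u x| ≤ ∑' n, weightedErr φ ((2 : ℝ) • x) 0 n :=
        abs_sub_hyersLimit_le hu0 hJ hx (hsummable _ _ (h2x x hx) le_rfl)
    _ ≤ Θ := Real.tsum_le_of_sum_range_le (herr_nonneg _ _) (hpartial _ _ (h2x x hx) le_rfl)

/-- analytic core of Theorem `thm:AA`: a monotone `u` on `ℝ^d₊` with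
`u 0 = 0` that approximately satisfies Jensen's equation up to `φ`, with summable
weighted errors bounded by `Θ`, is within `Θ` of the linear function
`v x = lim 2^{-n} u (2^n x)`. -/
theorem stmt_9 (d : ℕ) (u : (Fin d → ℝ) → ℝ)
    (hmono : ∀ x y : Fin d → ℝ, 0 ≤ x → x ≤ y → u x ≤ u y)
    (hu0 : u 0 = 0)
    (φ : (Fin d → ℝ) → (Fin d → ℝ) → ℝ) (hφ : ∀ x y, 0 ≤ φ x y)
    (Θ : ℝ) (hΘ : 0 ≤ Θ)
    (hJ : ∀ x y : Fin d → ℝ, 0 ≤ x → 0 ≤ y →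
      |u ((1 / 2 : ℝ) • (x + y)) - (1 / 2) * u x - (1 / 2) * u y| ≤ φ x y)
    (hsum : ∀ n : ℕ, 1 ≤ n → ∀ x y : Fin d → ℝ, 0 ≤ x → 0 ≤ y →
      ∑ i ∈ Finset.range (n + 1), (1 / 2 : ℝ) ^ i * φ ((2 : ℝ) ^ i • x) ((2 : ℝ) ^ i • y) ≤ Θ) :
    ∃ v : (Fin d → ℝ) → ℝ,
      (∀ x : Fin d → ℝ, 0 ≤ x →
        Filter.Tendsto (fun n : ℕ => (1 / 2 : ℝ) ^ n * u ((2 : ℝ) ^ n • x))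
          Filter.atTop (nhds (v x))) ∧
      (∀ x : Fin d → ℝ, 0 ≤ x → v x = ∑ i, x i * v (Pi.single i 1)) ∧
      (∀ x : Fin d → ℝ, 0 ≤ x → |u x - v x| ≤ Θ) :=
  stmt_9_general d u hmono hu0 φ hφ Θ hJ hsum
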